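/- Let f_1, …, f_k (k ≥ 2) be linearly independent holomorphic modular forms of weight m for a Fuchsian group of the first kind Γ. Then the Wronskian W(f_1,…,f_k) is a nonzero cusp form of weight k(m+k−1) for Γ. -/

import Mathlib

open UpperHalfPlane

/-- The extension (by junk value `0`) of a function on the upper half-plane to `ℂ`,
used to take complex derivatives. -/
noncomputable def ext (f : UpperHalfPlane → ℂ) : ℂ → ℂ :=
  fun z => if h : 0 < z.im then f ⟨z, h⟩ else 0

/-!
Write `f ∣[m] γ = u · (f ∘ φ)` with `u = (cz + d)⁻ᵐ` and `φ' = (cz + d)⁻²`. By the chain and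
Leibniz rules, the matrix of derivatives of the `u · (fⱼ ∘ φ)` is a lower-triangular matrix with
diagonal `u · φ'ⁱ` times the matrix of derivatives of the `fⱼ` at `φ z`; hence the Wronskian of
forms of weight `m` is invariant of weight `k (m + k - 1)`. It vanishes at every cusp because, by
Cauchy's estimates, all derivatives of a holomorphic function bounded at `i∞` tend to `0` there,
and for `k ≥ 2` every term of the determinant contains a first derivative. Finally, a Wronskian
vanishing on a connected open set forces linear dependence: near a point where `f₁ ≠ 0` it equals
`f₁ᵏ` times the Wronskian of the derivatives of the `fⱼ / f₁`, so induction on `k` applies, and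
the identity theorem spreads the relation.
-/
section Wronskian

open Matrix Set

noncomputable def wronskian {k : ℕ} (g : Fin k → ℂ → ℂ) (z : ℂ) : ℂ :=
  (Matrix.of fun i j : Fin k => iteratedDeriv i (g j) z).det

theorem wronskian_congr_of_eqOn {k : ℕ} {s : Set ℂ} (hs : IsOpen s) {g h : Fin k → ℂ → ℂ}
    (hgh : ∀ j, EqOn (g j) (h j) s) : EqOn (wronskian g) (wronskian h) s := by
  intro z hz
  simp only [wronskian]
  congr 1
  ext i j
  exact (hgh j).iteratedDeriv_of_isOpen hs i hz

theorem DifferentiableOn.iteratedDeriv {s : Set ℂ} {f : ℂ → ℂ} (hf : DifferentiableOn ℂ f s)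
    (hs : IsOpen s) (n : ℕ) : DifferentiableOn ℂ (iteratedDeriv n f) s := by
  induction n with
  | zero => simpa
  | succ n ih => rw [iteratedDeriv_succ]; exact ih.deriv hs

theorem DifferentiableOn.wronskian {k : ℕ} {s : Set ℂ} {g : Fin k → ℂ → ℂ}
    (hg : ∀ j, DifferentiableOn ℂ (g j) s) (hs : IsOpen s) :
    DifferentiableOn ℂ (wronskian g) s := by
  have (i j : Fin k) := (hg j).iteratedDeriv hs i
  unfold _root_.wronskian
  simp only [Matrix.det_apply, Matrix.of_apply]
  fun_prop

/-- `chainCoeff u φ i l` is the coefficient of `G⁽ˡ⁾ ∘ φ` in `(u · (G ∘ φ))⁽ⁱ⁾`. -/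
noncomputable def chainCoeff (u φ : ℂ → ℂ) : ℕ → ℕ → ℂ → ℂ
  | 0, 0 => u
  | 0, _ + 1 => 0
  | i + 1, 0 => deriv (chainCoeff u φ i 0)
  | i + 1, l + 1 => deriv (chainCoeff u φ i (l + 1)) + chainCoeff u φ i l * deriv φ

namespace chainCoeff

variable {u φ : ℂ → ℂ}

theorem eq_zero_of_lt : ∀ {i l : ℕ}, i < l → chainCoeff u φ i l = 0
  | 0, _ + 1, _ => rfl
  | i + 1, l + 1, h => by
    simp only [chainCoeff, eq_zero_of_lt (by omega : i < l + 1), eq_zero_of_lt (by omega : i < l)]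
    simp

theorem self (i : ℕ) : chainCoeff u φ i i = u * deriv φ ^ i := by
  induction i with
  | zero => simp [chainCoeff]
  | succ i ih => simp [chainCoeff, eq_zero_of_lt (Nat.lt_succ_self i), ih, pow_succ, mul_assoc]

theorem analyticOnNhd {s : Set ℂ} (hs : IsOpen s) (hu : DifferentiableOn ℂ u s)
    (hφ : DifferentiableOn ℂ φ s) : ∀ i l, AnalyticOnNhd ℂ (chainCoeff u φ i l) s
  | 0, 0 => hu.analyticOnNhd hs
  | 0, _ + 1 => analyticOnNhd_const
  | i + 1, 0 => (analyticOnNhd hs hu hφ i 0).deriv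
  | i + 1, l + 1 =>
    (analyticOnNhd hs hu hφ i (l + 1)).deriv.add
      ((analyticOnNhd hs hu hφ i l).mul (hφ.analyticOnNhd hs).deriv)

theorem iteratedDeriv_mul_comp {s t : Set ℂ} (hs : IsOpen s) (ht : IsOpen t)
    (hu : DifferentiableOn ℂ u s) (hφ : DifferentiableOn ℂ φ s) (hst : MapsTo φ s t)
    {G : ℂ → ℂ} (hG : DifferentiableOn ℂ G t) (i : ℕ) :
    EqOn (iteratedDeriv i fun w => u w * G (φ w))
      (fun z => ∑ l ∈ Finset.range (i + 1), chainCoeff u φ i l z * iteratedDeriv l G (φ z)) s := by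
  induction i with
  | zero => intro z _; simp [chainCoeff]
  | succ i ih =>
    intro z hz
    have hderiv : HasDerivAt
        (fun z => ∑ l ∈ Finset.range (i + 1), chainCoeff u φ i l z * iteratedDeriv l G (φ z))
        (∑ l ∈ Finset.range (i + 1), (deriv (chainCoeff u φ i l) z * iteratedDeriv l G (φ z) +
          chainCoeff u φ i l z * deriv φ z * iteratedDeriv (l + 1) G (φ z))) z := by
      refine HasDerivAt.fun_sum fun l _ => ?_
      have hG' : HasDerivAt (iteratedDeriv l G) (iteratedDeriv (l + 1) G (φ z)) (φ z) := by
        rw [iteratedDeriv_succ]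
        exact ((hG.iteratedDeriv ht l).differentiableAt (ht.mem_nhds (hst hz))).hasDerivAt
      have hc := ((analyticOnNhd hs hu hφ i l) z hz).differentiableAt.hasDerivAt
      exact (hc.mul (hG'.comp z (hφ.differentiableAt (hs.mem_nhds hz)).hasDerivAt)).congr_deriv
        (by rw [Function.comp_apply]; ring)
    rw [iteratedDeriv_succ, ((ih.eventuallyEq_of_mem (hs.mem_nhds hz)).deriv_eq).trans
      hderiv.deriv]
    beta_reduce
    rw [Finset.sum_range_succ' _ (i + 1), Finset.sum_add_distrib,
      Finset.sum_range_succ']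
    simp only [chainCoeff, Pi.add_apply, Pi.mul_apply, add_mul, Finset.sum_add_distrib]
    rw [Finset.sum_range_succ (fun l => deriv (chainCoeff u φ i (l + 1)) z * _),
      eq_zero_of_lt (Nat.lt_succ_self i)]
    simp only [deriv_const', Pi.zero_def, zero_mul, add_zero]
    ring

end chainCoeff

theorem wronskian_mul_comp {k : ℕ} {s t : Set ℂ} (hs : IsOpen s) (ht : IsOpen t) {u φ : ℂ → ℂ}
    (hu : DifferentiableOn ℂ u s) (hφ : DifferentiableOn ℂ φ s) (hst : MapsTo φ s t)
    {g : Fin k → ℂ → ℂ} (hg : ∀ j, DifferentiableOn ℂ (g j) t) {z : ℂ} (hz : z ∈ s) :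
    wronskian (fun j w => u w * g j (φ w)) z
      = u z ^ k * deriv φ z ^ k.choose 2 * wronskian g (φ z) := by
  set L : Matrix (Fin k) (Fin k) ℂ := Matrix.of fun i l => chainCoeff u φ i l z
  have hL : L.IsLowerTriangular := fun i l (h : (i : ℕ) < l) => by
    simp [L, chainCoeff.eq_zero_of_lt h]
  have hmul : (Matrix.of fun i j : Fin k => iteratedDeriv i (fun w => u w * g j (φ w)) z)
      = L * Matrix.of fun l j : Fin k => iteratedDeriv l (g j) (φ z) := by
    ext i j
    rw [of_apply, chainCoeff.iteratedDeriv_mul_comp hs ht hu hφ hst (hg j) i hz, mul_apply]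
    simp only [L, of_apply]
    rw [Fin.sum_univ_eq_sum_range (fun l => chainCoeff u φ i l z * iteratedDeriv l (g j) (φ z))]
    refine Finset.sum_subset (Finset.range_subset_range.2 i.2) fun l _ hl => ?_
    simp [chainCoeff.eq_zero_of_lt (not_lt.1 (Finset.mem_range.not.1 hl))]
  rw [wronskian, hmul, det_mul, det_of_isLowerTriangular L hL, wronskian]
  congr 1
  simp only [L, of_apply, chainCoeff.self, Pi.mul_apply, Pi.pow_apply, Finset.prod_mul_distrib,
    Finset.prod_const, Finset.card_univ, Fintype.card_fin]
  rw [Fin.prod_univ_eq_prod_range (fun i => deriv φ z ^ i), Finset.prod_pow_eq_pow_sum,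
    Finset.sum_range_id, Nat.choose_two_right]

theorem wronskian_mul {k : ℕ} {s : Set ℂ} (hs : IsOpen s) {u : ℂ → ℂ}
    (hu : DifferentiableOn ℂ u s) {g : Fin k → ℂ → ℂ} (hg : ∀ j, DifferentiableOn ℂ (g j) s)
    {z : ℂ} (hz : z ∈ s) : wronskian (fun j w => u w * g j w) z = u z ^ k * wronskian g z := by
  simpa using wronskian_mul_comp hs hs hu differentiableOn_id (mapsTo_id s) hg hz

theorem wronskian_cons_one {n : ℕ} (q : Fin n → ℂ → ℂ) (z : ℂ) :
    wronskian (Fin.cons (fun _ => 1) q) z = wronskian (fun j => deriv (q j)) z := by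
  rw [wronskian, det_succ_column_zero, Fin.sum_univ_succ]
  simp [iteratedDeriv_const, wronskian, submatrix, iteratedDeriv_succ']

theorem wronskian_eq_pow_mul_wronskian_deriv_div {n : ℕ} {s : Set ℂ} (hs : IsOpen s)
    {g : Fin (n + 1) → ℂ → ℂ} (hg : ∀ j, DifferentiableOn ℂ (g j) s) (h0 : ∀ z ∈ s, g 0 z ≠ 0)
    {z : ℂ} (hz : z ∈ s) :
    wronskian g z = g 0 z ^ (n + 1) * wronskian (fun j => deriv fun w => g j.succ w / g 0 w) z := by
  set p : Fin (n + 1) → ℂ → ℂ := Fin.cons (fun _ => 1) fun j w => g j.succ w / g 0 w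
  have hgp : ∀ j, EqOn (g j) (fun w => g 0 w * p j w) s :=
    Fin.cases (fun w _ => by simp [p]) fun j w hw => by simp [p, mul_div_cancel₀ _ (h0 w hw)]
  have hp : ∀ j, DifferentiableOn ℂ (p j) s :=
    Fin.cases (differentiableOn_const 1) fun j => (hg j.succ).div (hg 0) h0
  rw [wronskian_congr_of_eqOn hs hgp hz, wronskian_mul hs (hg 0) hp hz, wronskian_cons_one]

theorem exists_cons_sum_eq_zero_of_sum_deriv_div_eq_zero {n : ℕ} {s : Set ℂ} (hs : IsOpen s)
    (hsc : IsPreconnected s) {g : Fin (n + 1) → ℂ → ℂ} (hg : ∀ j, DifferentiableOn ℂ (g j) s)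
    (h0 : ∀ z ∈ s, g 0 z ≠ 0) {c : Fin n → ℂ}
    (hc : EqOn (fun z => ∑ j, c j * deriv (fun w => g j.succ w / g 0 w) z) 0 s) :
    ∃ C : ℂ, EqOn (fun z => ∑ j, (Fin.cons C c : Fin (n + 1) → ℂ) j * g j z) 0 s := by
  have hq (j : Fin n) : DifferentiableOn ℂ (fun w => g j.succ w / g 0 w) s :=
    (hg j.succ).div (hg 0) h0
  obtain ⟨C, hC⟩ := hs.exists_is_const_of_deriv_eq_zero hsc
    (f := fun z => ∑ j, c j * (g j.succ z / g 0 z)) (by fun_prop) fun z hz => by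
      refine (HasDerivAt.fun_sum fun j _ => ?_).deriv.trans (hc hz)
      exact ((hq j).differentiableAt (hs.mem_nhds hz)).hasDerivAt.const_mul _
  refine ⟨-C, fun z hz => ?_⟩
  have hsum : ∑ j, c j * g j.succ z = g 0 z * C := by
    rw [← hC z hz, Finset.mul_sum]
    refine Finset.sum_congr rfl fun j _ => ?_
    rw [mul_div_assoc', mul_div_assoc', mul_div_cancel_left₀ _ (h0 z hz)]
  simp [Fin.sum_univ_succ, hsum]
  ring

theorem exists_ne_zero_sum_eq_zero_of_wronskian_eq_zero {k : ℕ} {U : Set ℂ} (hU : IsOpen U)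
    (hUc : IsPreconnected U) (hne : U.Nonempty) {g : Fin k → ℂ → ℂ}
    (hg : ∀ j, DifferentiableOn ℂ (g j) U) (hW : EqOn (wronskian g) 0 U) :
    ∃ c : Fin k → ℂ, c ≠ 0 ∧ EqOn (fun z => ∑ j, c j * g j z) 0 U := by
  induction k generalizing U with
  | zero =>
    obtain ⟨z, hz⟩ := hne
    simpa [wronskian] using hW hz
  | succ n ih =>
    by_cases h0 : EqOn (g 0) 0 U
    · refine ⟨Pi.single 0 1, by simp, fun z hz => ?_⟩
      simp [Pi.single_apply, h0 hz]
    obtain ⟨z₀, hz₀, hgz₀⟩ : ∃ z₀ ∈ U, g 0 z₀ ≠ 0 := by simpa [EqOn] using h0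
    obtain ⟨r, hr, hball⟩ := Metric.eventually_nhds_iff_ball.1
      ((hU.eventually_mem hz₀).and (((hg 0).continuousOn.continuousAt
        (hU.mem_nhds hz₀)).eventually_ne hgz₀))
    have hDc : IsPreconnected (Metric.ball z₀ r) := (convex_ball z₀ r).isPreconnected
    have hz₀D : z₀ ∈ Metric.ball z₀ r := Metric.mem_ball_self hr
    have hgD (j) : DifferentiableOn ℂ (g j) (Metric.ball z₀ r) :=
      (hg j).mono fun z hz => (hball z hz).1
    have hg0D (z) (hz : z ∈ Metric.ball z₀ r) : g 0 z ≠ 0 := (hball z hz).2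
    obtain ⟨c, hc, hcq⟩ := ih Metric.isOpen_ball hDc ⟨z₀, hz₀D⟩
      (fun j => ((hgD j.succ).div (hgD 0) hg0D).deriv Metric.isOpen_ball) fun z hz => by
        have := wronskian_eq_pow_mul_wronskian_deriv_div Metric.isOpen_ball hgD hg0D hz
        rw [hW (hball z hz).1, Pi.zero_apply, eq_comm, mul_eq_zero] at this
        exact this.resolve_left (pow_ne_zero _ (hg0D z hz))
    obtain ⟨C, hC⟩ :=
      exists_cons_sum_eq_zero_of_sum_deriv_div_eq_zero Metric.isOpen_ball hDc hgD hg0D hcq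
    refine ⟨Fin.cons C c, fun h => hc (funext fun j => by simpa using congrFun h j.succ), ?_⟩
    refine ((DifferentiableOn.fun_sum fun j _ => (hg j).const_mul _).analyticOnNhd hU
      ).eqOn_zero_of_preconnected_of_eventuallyEq_zero hUc hz₀ ?_
    filter_upwards [Metric.isOpen_ball.mem_nhds hz₀D] using hC

end Wronskian

section AtImInfty

open Filter Complex Set

local notation "I∞" => comap Complex.im atTop

theorem zeroAtFilter_deriv {h : ℂ → ℂ} (hd : DifferentiableOn ℂ h upperHalfPlaneSet)
    (hb : BoundedAtFilter I∞ h) : ZeroAtFilter I∞ (deriv h) := by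
  obtain ⟨M, hM⟩ := hb.bound
  obtain ⟨A, -, hA⟩ := (atTop_basis.comap Complex.im).eventually_iff.1 hM
  refine Metric.tendsto_nhds.2 fun ε hε => ?_
  -- Cauchy's estimate on a disc of radius `r` where `‖h‖ ≤ M`; `r` is chosen so that `M / r < ε`.
  set r := (|M| + 1) / ε
  have hr : 0 < r := by positivity
  filter_upwards [preimage_mem_comap (Ici_mem_atTop (max A 1 + r))] with z hz
  have hball : Metric.closedBall z r ⊆ {w | max A 1 ≤ w.im} := fun w hw => by
    have := neg_le_of_abs_le ((abs_im_le_norm (w - z)).trans (mem_closedBall_iff_norm.1 hw))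
    simp only [mem_preimage, mem_Ici, sub_im] at hz this
    exact (by linarith : max A 1 ≤ w.im)
  have hcauchy : ‖deriv h z‖ ≤ M / r := norm_deriv_le_of_forall_mem_sphere_norm_le hr
    (hd.diffContOnCl_ball fun w hw => (zero_lt_one.trans_le (le_max_right A 1)).trans_le
      (hball hw))
    fun w hw => by
      simpa using hA ((le_max_left A 1).trans (hball (Metric.sphere_subset_closedBall hw)))
  rw [dist_zero_right]
  calc ‖deriv h z‖ ≤ M / r := hcauchy
    _ < ε := by
      have : ε * r = |M| + 1 := by simp only [r]; field_simp
      rw [div_lt_iff₀ hr, this]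
      linarith [le_abs_self M]

theorem zeroAtFilter_iteratedDeriv_succ {h : ℂ → ℂ}
    (hd : DifferentiableOn ℂ h upperHalfPlaneSet) (hb : BoundedAtFilter I∞ h) (n : ℕ) :
    ZeroAtFilter I∞ (iteratedDeriv (n + 1) h) := by
  induction n with
  | zero => simpa using zeroAtFilter_deriv hd hb
  | succ n ih =>
    rw [iteratedDeriv_succ]
    exact zeroAtFilter_deriv ((hd.iteratedDeriv isOpen_upperHalfPlaneSet _)) ih.boundedAtFilter

theorem boundedAtFilter_iteratedDeriv {h : ℂ → ℂ}
    (hd : DifferentiableOn ℂ h upperHalfPlaneSet) (hb : BoundedAtFilter I∞ h) :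
    ∀ n, BoundedAtFilter I∞ (iteratedDeriv n h)
  | 0 => by simpa
  | n + 1 => (zeroAtFilter_iteratedDeriv_succ hd hb n).boundedAtFilter

theorem zeroAtFilter_det {α : Type*} {ι : Type} [Fintype ι] [DecidableEq ι] {l : Filter α}
    {M : α → Matrix ι ι ℂ} (hb : ∀ i j, BoundedAtFilter l fun x => M x i j) (i₀ : ι)
    (h₀ : ∀ j, ZeroAtFilter l fun x => M x i₀ j) : ZeroAtFilter l fun x => (M x).det := by
  have hterm (σ : Equiv.Perm ι) : ZeroAtFilter l fun x => ∏ i, M x (σ i) i := by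
    have hsplit : (fun x => ∏ i, M x (σ i) i) = (fun x => M x i₀ (σ.symm i₀)) *
        ∏ i ∈ Finset.univ.erase (σ.symm i₀), fun x => M x (σ i) i := by
      ext x
      rw [Pi.mul_apply, Finset.prod_apply, ← Equiv.apply_symm_apply σ i₀, Equiv.symm_apply_apply]
      exact (Finset.mul_prod_erase _ (fun i => M x (σ i) i) (Finset.mem_univ _)).symm
    rw [hsplit]
    exact (h₀ _).mul_boundedAtFilter (BoundedAtFilter.prod _ fun i _ => hb _ _)
  simpa [ZeroAtFilter, Matrix.det_apply] using
    tendsto_finsetSum Finset.univ fun σ _ => (hterm σ).const_smul (Equiv.Perm.sign σ)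

theorem zeroAtFilter_wronskian {k : ℕ} (hk : 2 ≤ k) {g : Fin k → ℂ → ℂ}
    (hd : ∀ j, DifferentiableOn ℂ (g j) upperHalfPlaneSet) (hb : ∀ j, BoundedAtFilter I∞ (g j)) :
    ZeroAtFilter I∞ (wronskian g) :=
  zeroAtFilter_det (fun i j => boundedAtFilter_iteratedDeriv (hd j) (hb j) i) ⟨1, hk⟩
    fun j => zeroAtFilter_iteratedDeriv_succ (hd j) (hb j) 0

end AtImInfty

section Modular

open Set
open scoped ModularForm MatrixGroups Manifold

noncomputable def wronskianUHP {k : ℕ} (f : Fin k → ℍ → ℂ) (τ : ℍ) : ℂ :=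
  wronskian (fun j => f j ∘ ofComplex) τ

theorem iteratedDerivWithin_ext (f : ℍ → ℂ) (n : ℕ) (τ : ℍ) :
    iteratedDerivWithin n (_root_.ext f) {z : ℂ | 0 < z.im} τ =
      iteratedDeriv n (f ∘ ofComplex) τ := by
  rw [iteratedDerivWithin_of_isOpen isOpen_upperHalfPlaneSet τ.2]
  refine Set.EqOn.iteratedDeriv_of_isOpen (fun z hz => ?_) isOpen_upperHalfPlaneSet n τ.2
  rw [_root_.ext, dif_pos (show 0 < z.im from hz), Function.comp_apply,
    ofComplex_apply_of_im_pos hz]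

theorem mdifferentiable_wronskianUHP {k : ℕ} {f : Fin k → ℍ → ℂ} (hf : ∀ j, MDiff (f j)) :
    MDiff (wronskianUHP f) := by
  rw [mdifferentiable_iff]
  refine (DifferentiableOn.wronskian (fun j => mdifferentiable_iff.1 (hf j))
    isOpen_upperHalfPlaneSet).congr fun z hz => ?_
  simp [wronskianUHP, ofComplex_apply_of_im_pos hz]

theorem isZeroAtImInfty_wronskianUHP {k : ℕ} (hk : 2 ≤ k) {f : Fin k → ℍ → ℂ}
    (hf : ∀ j, MDiff (f j)) (hb : ∀ j, IsBoundedAtImInfty (f j)) :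
    IsZeroAtImInfty (wronskianUHP f) :=
  (zeroAtFilter_wronskian hk (fun j => mdifferentiable_iff.1 (hf j))
    fun j => (hb j).comp_tendsto tendsto_comap_im_ofComplex).comp tendsto_coe_atImInfty

theorem pow_mul_pow_choose_eq_zpow {d : ℂ} (hd : d ≠ 0) (m : ℤ) (k : ℕ) :
    (d ^ (-m)) ^ k * (1 / d ^ 2) ^ k.choose 2 = d ^ (-((k : ℤ) * (m + k - 1))) := by
  have hchoose : ∀ k : ℕ, (k.choose 2 : ℤ) * 2 = k * (k - 1) := by
    intro k
    induction k with
    | zero => simp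
    | succ k ih => rw [Nat.choose_succ_succ, Nat.choose_one_right]; push_cast; linarith
  simp only [one_div, ← zpow_natCast, ← _root_.zpow_neg_one, ← _root_.zpow_mul]
  rw [← zpow_add₀ hd]
  congr 1
  push_cast
  linear_combination (-1 : ℤ) * hchoose k

theorem wronskianUHP_slash {k : ℕ} {f : Fin k → ℍ → ℂ} (hf : ∀ j, MDiff (f j)) (m : ℤ)
    (A : SL(2, ℤ)) :
    wronskianUHP (fun j => f j ∣[m] A) = wronskianUHP f ∣[(k : ℤ) * (m + k - 1)] A := by
  have hdet : (A : GL (Fin 2) ℝ).val.det = 1 := by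
    rw [← Matrix.GeneralLinearGroup.val_det_apply]; simp
  set φ : ℂ → ℂ := fun w => ↑((A : GL (Fin 2) ℝ) • ofComplex w)
  have hφ : DifferentiableOn ℂ φ upperHalfPlaneSet := fun z hz =>
    (hasStrictDerivAt_smul (hdet ▸ one_pos) ⟨z, hz⟩).hasDerivAt.differentiableAt
      |>.differentiableWithinAt
  have hu : DifferentiableOn ℂ (fun w => denom A w ^ (-m)) upperHalfPlaneSet := fun z hz =>
    (hasDerivAt_denom_zpow _ _ ⟨z, hz⟩).differentiableAt.differentiableWithinAt
  have hslash (j) : EqOn ((f j ∣[m] A) ∘ ofComplex)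
      (fun w => denom A w ^ (-m) * (f j ∘ ofComplex) (φ w)) upperHalfPlaneSet := fun z hz => by
    simp [φ, ModularForm.SL_slash_apply, ofComplex_apply_of_im_pos hz, mul_comm]
  ext τ
  rw [ModularForm.SL_slash_apply, wronskianUHP, wronskian_congr_of_eqOn isOpen_upperHalfPlaneSet
    hslash τ.2, wronskian_mul_comp isOpen_upperHalfPlaneSet isOpen_upperHalfPlaneSet hu hφ
    (fun z _ => UpperHalfPlane.im_pos _) (fun j => mdifferentiable_iff.1 (hf j)) τ.2,
    deriv_smul (hdet ▸ one_pos), hdet, Complex.ofReal_one, pow_mul_pow_choose_eq_zpow (denom_ne_zero _ τ), mul_comm]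
  simp [φ, wronskianUHP, ofComplex_apply, ModularGroup.sl_moeb]

noncomputable def wronskianCuspForm {Γ : Subgroup SL(2, ℤ)} [Γ.FiniteIndex] {m : ℤ} {k : ℕ}
    (hk : 2 ≤ k) (f : Fin k → ModularForm Γ m) : CuspForm Γ ((k : ℤ) * (m + k - 1)) where
  toFun := wronskianUHP fun j => f j
  slash_action_eq' γ hγ := by
    obtain ⟨γ, -, rfl⟩ := Subgroup.mem_map.1 hγ
    change (wronskianUHP fun j => f j) ∣[(k : ℤ) * (m + k - 1)] γ = _
    rw [← wronskianUHP_slash fun j => ModularFormClass.holo (f j)]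
    exact congrArg wronskianUHP (funext fun j => SlashInvariantForm.slash_action_eqn (f j) _ hγ)
  holo' := mdifferentiable_wronskianUHP fun j => (f j).holo'
  zero_at_cusps' hc := (OnePoint.isZeroAt_iff_forall_SL2Z
    ((Subgroup.IsArithmetic.isCusp_iff_isCusp_SL2Z _).1 hc)).2 fun γ _ => by
      rw [← wronskianUHP_slash fun j => ModularFormClass.holo (f j)]
      exact isZeroAtImInfty_wronskianUHP hk (fun j => (ModularFormClass.holo (f j)).slash m _)
        fun j => ModularFormClass.bdd_at_infty_slash (f j) γ

theorem wronskianCuspForm_apply {Γ : Subgroup SL(2, ℤ)} [Γ.FiniteIndex] {m : ℤ} {k : ℕ}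
    (hk : 2 ≤ k) (f : Fin k → ModularForm Γ m) (τ : ℍ) :
    wronskianCuspForm hk f τ = wronskianUHP (fun j => f j) τ := rfl

theorem wronskianCuspForm_ne_zero {Γ : Subgroup SL(2, ℤ)} [Γ.FiniteIndex] {m : ℤ} {k : ℕ}
    (hk : 2 ≤ k) {f : Fin k → ModularForm Γ m} (hf : LinearIndependent ℂ f) :
    wronskianCuspForm hk f ≠ 0 := by
  intro h
  have hW : EqOn (wronskian fun j => f j ∘ ofComplex) 0 upperHalfPlaneSet := fun z hz => by
    simpa [wronskianCuspForm_apply, wronskianUHP] using DFunLike.congr_fun h ⟨z, hz⟩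
  obtain ⟨c, hc, hsum⟩ := exists_ne_zero_sum_eq_zero_of_wronskian_eq_zero isOpen_upperHalfPlaneSet
    (convex_halfSpace_im_gt 0).isPreconnected ⟨Complex.I, by simp⟩
    (fun j => mdifferentiable_iff.1 (f j).holo') hW
  refine hc (funext (Fintype.linearIndependent_iff.1 hf c (DFunLike.ext _ _ fun τ => ?_)))
  simpa [ofComplex_apply] using hsum τ.2

end Modular

theorem wronskian_is_nonzero_cusp_form_general
    (Γ : Subgroup (Matrix.SpecialLinearGroup (Fin 2) ℤ)) (hΓ : Γ.index ≠ 0)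
    (m : ℤ) (k : ℕ) (hk : 2 ≤ k)
    (f : Fin k → ModularForm Γ m) (hli : LinearIndependent ℂ f) :
    ∃ F : CuspForm Γ ((k : ℤ) * (m + k - 1)),
      (∀ τ : UpperHalfPlane, F τ = Matrix.det
        (Matrix.of fun i j : Fin k =>
          iteratedDerivWithin (i : ℕ) (ext (f j)) {z : ℂ | 0 < z.im} (τ : ℂ))) ∧
      F ≠ 0 := by
  have : Γ.FiniteIndex := ⟨hΓ⟩
  refine ⟨wronskianCuspForm hk f, fun τ => ?_, wronskianCuspForm_ne_zero hk hli⟩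
  simp only [wronskianCuspForm_apply, wronskianUHP, wronskian, iteratedDerivWithin_ext]

/-- Let `f₁,…,f_k` (`k ≥ 2`) be linearly independent holomorphic
modular forms of weight `m` for a Fuchsian group of the first kind
`Γ` (a finite-index subgroup of `SL(2,ℤ)`).  Then the Wronskian
`W(f₁,…,f_k)(z) = det (d^{i-1}fⱼ/dz^{i-1}(z))` is a nonzero cusp form of weight
`k(m+k-1)` for `Γ`. -/
theorem wronskian_is_nonzero_cusp_form
    (Γ : Subgroup (Matrix.SpecialLinearGroup (Fin 2) ℤ)) (hΓ : Γ.index ≠ 0)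
    (m : ℤ) (hm : 1 ≤ m) (k : ℕ) (hk : 2 ≤ k)
    (f : Fin k → ModularForm Γ m) (hli : LinearIndependent ℂ f) :
    ∃ F : CuspForm Γ ((k : ℤ) * (m + k - 1)),
      (∀ τ : UpperHalfPlane, F τ = Matrix.det
        (Matrix.of fun i j : Fin k =>
          iteratedDerivWithin (i : ℕ) (ext (f j)) {z : ℂ | 0 < z.im} (τ : ℂ))) ∧
      F ≠ 0 :=
  wronskian_is_nonzero_cusp_form_general Γ hΓ m k hk f hli
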